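/- For nonnegative integers m and n, s_{((2m)^n, 0^n)}(x_1,…,x_n,x_1^{-1},…,x_n^{-1}) = (-1)^{mn} · so^odd_{(m^n)}(x_1,…,x_n) · so^odd_{(m^n)}(-x_1,…,-x_n), where (a^n) denotes the partition with all n parts equal to a, and ((2m)^n, 0^n) is the partition with n parts equal to 2m followed by n zero parts. -/

import Mathlib

noncomputable section

/-- The field ℚ(y_1,…,y_n) of rational functions in the square-root variables
y_i = x_i^{1/2}, so that x_i = y_i². -/
abbrev K (n : ℕ) : Type := FractionRing (MvPolynomial (Fin n) ℚ)

/-- The square-root variable y_i = x_i^{1/2}. -/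
def Y {n : ℕ} (i : Fin n) : K n :=
  algebraMap (MvPolynomial (Fin n) ℚ) (K n) (MvPolynomial.X i)

/-- The variable x_i = y_i². -/
def Xv {n : ℕ} (i : Fin n) : K n := (Y i) ^ 2

/-- ∏_{i<j} (z_i + z_i⁻¹ - z_j - z_j⁻¹). -/
def xpairs {F : Type*} [Field F] {m : ℕ} (z : Fin m → F) : F :=
  ∏ i : Fin m, ∏ j : Fin m, if i < j then z i + (z i)⁻¹ - z j - (z j)⁻¹ else 1

/-- Bialternant Schur polynomial s_μ(z) = det(z_i^{μ_j+m-j}) / ∏_{i<j}(z_i - z_j). -/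
def schur {F : Type*} [Field F] (m : ℕ) (μ : Fin m → ℤ) (z : Fin m → F) : F :=
  (Matrix.of fun i j : Fin m => z i ^ (μ j + m - 1 - (j : ℕ))).det /
    ∏ i : Fin m, ∏ j : Fin m, if i < j then z i - z j else 1

/-- Odd orthogonal character so^odd, indexed by the doubled partition m = 2λ,
in the square-root variables y (x_i = y_i²). -/
def soOddD {F : Type*} [Field F] (n : ℕ) (m : Fin n → ℤ) (y : Fin n → F) : F :=
  (Matrix.of fun i j : Fin n =>
      y i ^ (m j + 2 * n - 2 * (j : ℕ) - 1) - y i ^ (-(m j + 2 * n - 2 * (j : ℕ) - 1))).det /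
    ((∏ i : Fin n, (y i - (y i)⁻¹)) * xpairs fun i => (y i) ^ 2)

/-- The odd orthogonal character so^odd_λ for a partition λ, written in its Laurent-polynomial
form so^odd_λ(z) = det(∑_{t=-(λ_j+n-j)}^{λ_j+n-j} z_i^t) / ∏_{i<j}(z_i + z_i⁻¹ - z_j - z_j⁻¹),
which can be evaluated at negated arguments. -/
def soOddL {F : Type*} [Field F] (n : ℕ) (lam : Fin n → ℤ) (z : Fin n → F) : F :=
  (Matrix.of fun i j : Fin n =>
      ∑ t ∈ Finset.Icc (-(lam j + n - 1 - (j : ℕ))) (lam j + n - 1 - (j : ℕ)), z i ^ t).det /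
    xpairs z

/-!
Put x_i = y_i². Reverse the last n columns of the bialternant matrix of ((2m)^n, 0^n) at
(x, x⁻¹) and rescale its rows by y_i^{∓(2m+2n-1)}: it becomes the block matrix [[U, V], [V, U]] with
U = (y_i^{e_j}), V = (y_i^{-e_j}), e_j = 2(m+n-j)-1, whose determinant is det(U + V) · det(U - V).
The factor det(U - V) is the numerator of so^odd_{(m^n)}(x). Summing the geometric series
∑_{|t| ≤ r} (-x)^t shows that det(U + V) is ± ∏ (y_i + y_i⁻¹) times the numerator of
so^odd_{(m^n)}(-x). On the other side, the Vandermonde product of (x, x⁻¹) is ∏ (x_i - x_i⁻¹) times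
the two denominators ∏_{i<j} (x_i + x_i⁻¹ - x_j - x_j⁻¹) and ∏_{i<j} (-x_i - x_i⁻¹ + x_j + x_j⁻¹),
and ∏ (x_i - x_i⁻¹) = ∏ (y_i - y_i⁻¹) ∏ (y_i + y_i⁻¹), so the extra factor cancels. The sign of
the column reversal, (-1)^{n(n-1)/2}, combines with the signs of the geometric sums to (-1)^{mn}.
-/

open Finset Equiv Equiv.Perm

theorem Matrix.det_fromBlocks_eq_det_add_mul_det_sub {R ι : Type*} [CommRing R] [Fintype ι]
    [DecidableEq ι] (A B : Matrix ι ι R) :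
    (fromBlocks A B B A).det = (A + B).det * (A - B).det := by
  have h : fromBlocks 1 0 1 1 * fromBlocks (A + B) B 0 (A - B) * fromBlocks 1 0 (-1) 1 =
      fromBlocks A B B A := by
    simp [fromBlocks_multiply]
  rw [← h, det_mul, det_mul, det_fromBlocks_zero₁₂, det_fromBlocks_zero₂₁, det_fromBlocks_zero₁₂]
  simp

theorem Matrix.det_eq_sign_mul_det_submatrix {R ι : Type*} [CommRing R] [Fintype ι]
    [DecidableEq ι] (σ : Perm ι) (M : Matrix ι ι R) :
    M.det = sign σ * (M.submatrix id σ).det := by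
  rw [det_permute', ← mul_assoc, ← Int.cast_mul, ← Units.val_mul, Int.units_mul_self, Units.val_one,
    Int.cast_one, one_mul]

theorem Fin.sign_revPerm (n : ℕ) :
    sign (Fin.revPerm : Perm (Fin n)) = (-1) ^ ∑ i : Fin n, (i : ℕ) := by
  induction n with
  | zero => rfl
  | succ n ih =>
    have h : (Fin.revPerm : Perm (Fin (n + 1))) =
        decomposeFin.symm (0, Fin.revPerm) * finRotate (n + 1) := by
      ext i
      refine Fin.lastCases ?_ (fun i => ?_) i
      · simp
      · simp only [Perm.coe_mul, Function.comp_apply, finRotate_apply, Fin.coeSucc_eq_succ,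
          decomposeFin_symm_apply_succ, swap_self, refl_apply, Fin.val_succ,
          Fin.revPerm_apply, Fin.val_rev, Fin.val_castSucc]
        omega
    rw [h, map_mul, decomposeFin.symm_sign, ih, sign_finRotate, Fin.sum_univ_castSucc]
    simp [pow_add]

theorem prod_ite_lt_mul_prod_ite_lt {ι M : Type*} [Fintype ι] [LinearOrder ι] [CommMonoid M]
    (f g : ι → ι → M) :
    (∏ i, ∏ j, if i < j then f i j else 1) * (∏ i, ∏ j, if i < j then g i j else 1) =
      ∏ i, ∏ j, if i < j then f i j * g i j else 1 := by
  simp_rw [← prod_mul_distrib]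
  refine prod_congr rfl fun i _ => prod_congr rfl fun j _ => ?_
  split_ifs <;> simp

theorem prod_prod_eq_prod_diag_mul_prod_lt {ι M : Type*} [Fintype ι] [LinearOrder ι]
    [CommMonoid M] (h : ι → ι → M) :
    ∏ i, ∏ j, h i j = (∏ i, h i i) * ∏ i, ∏ j, if i < j then h i j * h j i else 1 := by
  have hsplit (i j : ι) : h i j = (if i = j then h i j else 1) *
      ((if i < j then h i j else 1) * (if j < i then h i j else 1)) := by
    rcases lt_trichotomy i j with hij | rfl | hij
    · simp [hij, hij.ne, hij.not_gt]
    · simp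
    · simp [hij, hij.ne', hij.not_gt]
  have hlower : ∏ i, ∏ j, (if j < i then h i j else 1) = ∏ i, ∏ j, if i < j then h j i else 1 :=
    prod_comm
  simp_rw [prod_congr rfl fun i _ => prod_congr rfl fun j _ => hsplit i j, prod_mul_distrib,
    hlower, prod_ite_lt_mul_prod_ite_lt, prod_ite_eq, mem_univ, if_true]

theorem sq_zpow {G : Type*} [DivisionMonoid G] (y : G) (a : ℤ) : (y ^ 2) ^ a = y ^ (2 * a) := by
  rw [_root_.zpow_mul]; norm_cast

theorem Fin.sign_revPerm_mul_neg_one_pow {R : Type*} [CommRing R] (m n : ℕ) :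
    ((sign (Fin.revPerm : Perm (Fin n)) : ℤ) : R) * (-1) ^ ∑ j : Fin n, (m + Fin.rev j : ℕ) =
      (-1) ^ (m * n) := by
  have hrev := Equiv.sum_comp Fin.revPerm fun j : Fin n => (j : ℕ)
  simp only [Fin.revPerm_apply] at hrev
  rw [Fin.sign_revPerm, sum_add_distrib, hrev, Fin.sum_const, smul_eq_mul]
  push_cast
  rw [pow_add, mul_left_comm, ← pow_add, Even.neg_one_pow ⟨_, rfl⟩, mul_one, mul_comm n]

section Field

variable {F : Type*} [Field F]

theorem geom_sum_Icc_zpow_mul {w : F} (hw : w ≠ 0) {a b : ℤ} (hab : a ≤ b + 1) :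
    (∑ t ∈ Icc a b, w ^ t) * (w - 1) = w ^ (b + 1) - w ^ a := by
  obtain ⟨c, rfl⟩ : ∃ c, b = c - 1 := ⟨b + 1, by ring⟩
  rw [sub_add_cancel] at hab ⊢
  induction c, hab using Int.leInduction with
  | base => simp
  | succ c hac ih =>
    rw [add_sub_cancel_right, ← insert_Icc_sub_one_right_eq_Icc hac, sum_insert (by simp),
      add_mul, ih, zpow_add_one₀ hw]
    ring

theorem zpow_odd_add_zpow_neg_odd {y : F} (hy : y ≠ 0) (r : ℕ) :
    y ^ (2 * (r : ℤ) + 1) + y ^ (-(2 * (r : ℤ) + 1)) =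
      (-1) ^ r * (y + y⁻¹) * ∑ t ∈ Icc (-(r : ℤ)) r, (-y ^ 2) ^ t := by
  have hg := geom_sum_Icc_zpow_mul (neg_ne_zero.2 (pow_ne_zero 2 hy)) (a := -r) (b := r) (by omega)
  rw [show 2 * (r : ℤ) + 1 = ((2 * r + 1 : ℕ) : ℤ) by push_cast; ring, zpow_neg, zpow_natCast]
  rw [show (r : ℤ) + 1 = ((r + 1 : ℕ) : ℤ) by push_cast; ring, zpow_neg, zpow_natCast,
    zpow_natCast, neg_pow, neg_pow (y ^ 2)] at hg
  set S := ∑ t ∈ Icc (-(r : ℤ)) r, (-y ^ 2) ^ t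
  have h1 : ((-1 : F) ^ r) ^ 2 = 1 := by rw [← pow_mul, pow_mul', neg_one_sq, one_pow]
  field_simp at hg ⊢
  linear_combination y * hg - y ^ (4 * r + 3) * h1

theorem sub_mul_sub_inv_mul_inv_sub_inv {a b : F} (ha : a ≠ 0) (hb : b ≠ 0) :
    (a - b) * ((a - b⁻¹) * (b - a⁻¹)) * (a⁻¹ - b⁻¹) =
      (a + a⁻¹ - b - b⁻¹) * (-a + (-a)⁻¹ - -b - (-b)⁻¹) := by
  field_simp
  ring

end Field

def finSumSelf (n : ℕ) : Fin n ⊕ Fin n ≃ Fin (2 * n) :=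
  finSumFinEquiv.trans (finCongr (two_mul n).symm)

section

variable {n : ℕ}

@[simp] theorem finSumSelf_inl (i : Fin n) : (finSumSelf n (.inl i) : ℕ) = i := by
  simp [finSumSelf]

@[simp] theorem finSumSelf_inr (i : Fin n) : (finSumSelf n (.inr i) : ℕ) = n + i := by
  simp [finSumSelf, add_comm]

theorem prod_ite_lt_finSumSelf {M : Type*} [CommMonoid M] (g : Fin (2 * n) → Fin (2 * n) → M) :
    ∏ i, ∏ j, (if i < j then g i j else 1) =
      (∏ i, ∏ j, if i < j then g (finSumSelf n (.inl i)) (finSumSelf n (.inl j)) else 1) *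
      (∏ i, ∏ j, g (finSumSelf n (.inl i)) (finSumSelf n (.inr j))) *
      ∏ i, ∏ j, if i < j then g (finSumSelf n (.inr i)) (finSumSelf n (.inr j)) else 1 := by
  have hll (i j : Fin n) : finSumSelf n (.inl i) < finSumSelf n (.inl j) ↔ i < j := by
    simp only [Fin.lt_def, finSumSelf_inl]
  have hlr (i j : Fin n) : finSumSelf n (.inl i) < finSumSelf n (.inr j) := by
    simp only [Fin.lt_def, finSumSelf_inl, finSumSelf_inr]; omega
  have hrl (i j : Fin n) : ¬ finSumSelf n (.inr i) < finSumSelf n (.inl j) := by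
    simp only [Fin.lt_def, finSumSelf_inl, finSumSelf_inr]; omega
  have hrr (i j : Fin n) : finSumSelf n (.inr i) < finSumSelf n (.inr j) ↔ i < j := by
    simp only [Fin.lt_def, finSumSelf_inr]; omega
  rw [← (finSumSelf n).prod_comp]
  simp_rw [← (finSumSelf n).prod_comp (fun j => if _ < j then _ else _)]
  simp [Fintype.prod_sum_type, hll, hlr, hrl, hrr, prod_mul_distrib, mul_assoc]

variable {F : Type*} [Field F]

def appendInv (x : Fin n → F) : Fin (2 * n) → F :=
  fun i => if h : (i : ℕ) < n then x ⟨i, h⟩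
    else (x ⟨i - n, Nat.sub_lt_left_of_lt_add (not_lt.1 h) (two_mul n ▸ i.isLt)⟩)⁻¹

@[simp] theorem appendInv_inl (x : Fin n → F) (i : Fin n) :
    appendInv x (finSumSelf n (.inl i)) = x i := by
  simp [appendInv]

@[simp] theorem appendInv_inr (x : Fin n → F) (i : Fin n) :
    appendInv x (finSumSelf n (.inr i)) = (x i)⁻¹ := by
  simp [appendInv]

theorem prod_ite_lt_appendInv_sub {x : Fin n → F} (hx : ∀ i, x i ≠ 0) :
    (∏ i, ∏ j, if i < j then appendInv x i - appendInv x j else 1) =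
      (∏ i, (x i - (x i)⁻¹)) * (xpairs x * xpairs fun i => -x i) := by
  rw [prod_ite_lt_finSumSelf]
  simp only [appendInv_inl, appendInv_inr]
  rw [prod_prod_eq_prod_diag_mul_prod_lt (fun i j => x i - (x j)⁻¹), mul_left_comm, mul_assoc,
    prod_ite_lt_mul_prod_ite_lt, prod_ite_lt_mul_prod_ite_lt, xpairs, xpairs,
    prod_ite_lt_mul_prod_ite_lt]
  congr 1
  refine prod_congr rfl fun i _ => prod_congr rfl fun j _ => ?_
  split_ifs
  · exact sub_mul_sub_inv_mul_inv_sub_inv (hx i) (hx j)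
  · rfl

theorem det_zpow_odd_add_zpow_neg_odd {y : Fin n → F} (hy : ∀ i, y i ≠ 0) (r : Fin n → ℕ) :
    (Matrix.of fun i j => y i ^ (2 * (r j : ℤ) + 1) + y i ^ (-(2 * (r j : ℤ) + 1))).det =
      (-1) ^ (∑ j, r j) * (∏ i, (y i + (y i)⁻¹)) *
        (Matrix.of fun i j => ∑ t ∈ Icc (-(r j : ℤ)) (r j), (-y i ^ 2) ^ t).det := by
  have hB : (Matrix.of fun i j => y i ^ (2 * (r j : ℤ) + 1) + y i ^ (-(2 * (r j : ℤ) + 1))) =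
      Matrix.diagonal (fun i => y i + (y i)⁻¹) *
        (Matrix.of fun i j => ∑ t ∈ Icc (-(r j : ℤ)) (r j), (-y i ^ 2) ^ t) *
        Matrix.diagonal (fun j => (-1) ^ r j) := by
    ext i j
    rw [Matrix.of_apply, zpow_odd_add_zpow_neg_odd (hy i), Matrix.mul_diagonal,
      Matrix.diagonal_mul, Matrix.of_apply]
    ring
  rw [hB, Matrix.det_mul, Matrix.det_mul, Matrix.det_diagonal, Matrix.det_diagonal,
    prod_pow_eq_pow_sum]
  ring

theorem det_rect_appendInv_sq (m : ℕ) {y : Fin n → F} (hy : ∀ i, y i ≠ 0) :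
    (Matrix.of fun i j : Fin (2 * n) => appendInv (fun i => y i ^ 2) i ^
        ((if (j : ℕ) < n then (2 * m : ℤ) else 0) + ((2 * n : ℕ) : ℤ) - 1 - (j : ℕ))).det =
      sign (Fin.revPerm : Perm (Fin n)) *
        ((Matrix.of fun i j : Fin n => y i ^ (2 * (m : ℤ) + 2 * n - 2 * (j : ℕ) - 1) +
            y i ^ (-(2 * (m : ℤ) + 2 * n - 2 * (j : ℕ) - 1))).det *
          (Matrix.of fun i j : Fin n => y i ^ (2 * (m : ℤ) + 2 * n - 2 * (j : ℕ) - 1) -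
            y i ^ (-(2 * (m : ℤ) + 2 * n - 2 * (j : ℕ) - 1))).det) := by
  set M : Matrix (Fin (2 * n)) (Fin (2 * n)) F := .of fun i j => appendInv (fun i => y i ^ 2) i ^
    ((if (j : ℕ) < n then (2 * m : ℤ) else 0) + ((2 * n : ℕ) : ℤ) - 1 - (j : ℕ)) 
  set T : ℤ := 2 * m + 2 * n - 1
  set σ : Perm (Fin n ⊕ Fin n) := Perm.sumCongr 1 Fin.revPerm
  set w : Fin n ⊕ Fin n → F := Sum.elim (fun i => y i ^ (-T)) (fun i => y i ^ T)
  have hw : ∏ s, w s = 1 := by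
    simp only [w, Fintype.prod_sum_type, Sum.elim_inl, Sum.elim_inr, zpow_neg, prod_inv_distrib]
    exact inv_mul_cancel₀ (prod_ne_zero_iff.2 fun i _ => zpow_ne_zero _ (hy i))
  have hblocks : Matrix.of (fun s t =>
      w s * (M.submatrix (finSumSelf n) (finSumSelf n)).submatrix id σ s t) =
      Matrix.fromBlocks
        (.of fun i j : Fin n => y i ^ (2 * (m : ℤ) + 2 * n - 2 * (j : ℕ) - 1))
        (.of fun i j : Fin n => y i ^ (-(2 * (m : ℤ) + 2 * n - 2 * (j : ℕ) - 1)))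
        (.of fun i j : Fin n => y i ^ (-(2 * (m : ℤ) + 2 * n - 2 * (j : ℕ) - 1)))
        (.of fun i j : Fin n => y i ^ (2 * (m : ℤ) + 2 * n - 2 * (j : ℕ) - 1)) := by
    ext (i | i) (j | j) <;>
      simp only [Matrix.of_apply, Matrix.submatrix_apply, Matrix.fromBlocks_apply₁₁,
        Matrix.fromBlocks_apply₁₂, Matrix.fromBlocks_apply₂₁, Matrix.fromBlocks_apply₂₂, w, M, σ,
        Perm.sumCongr_apply, Sum.map_inl, Sum.map_inr, Perm.coe_one, id_eq, Sum.elim_inl,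
        Sum.elim_inr, appendInv_inl, appendInv_inr, finSumSelf_inl, finSumSelf_inr,
        Fin.revPerm_apply, Fin.val_rev, Fin.is_lt, add_lt_iff_neg_left, not_lt_zero, ite_true,
        ite_false, inv_zpow', sq_zpow, ← zpow_add₀ (hy i)] <;>
      congr 1 <;> push_cast <;> omega
  rw [← Matrix.det_submatrix_equiv_self (finSumSelf n) M, Matrix.det_eq_sign_mul_det_submatrix σ,
    sign_sumCongr, Perm.sign_one, one_mul, ← one_mul (Matrix.det _), ← hw,
    ← Matrix.det_mul_column, hblocks, Matrix.det_fromBlocks_eq_det_add_mul_det_sub]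
  rfl

theorem schur_appendInv_sq_rect (m : ℕ) {y : Fin n → F} (hy : ∀ i, y i + (y i)⁻¹ ≠ 0) :
    schur (2 * n) (fun j => if (j : ℕ) < n then (2 * m : ℤ) else 0) (appendInv fun i => y i ^ 2) =
      (-1) ^ (m * n) * soOddD n (fun _ => 2 * (m : ℤ)) y *
        soOddL n (fun _ => (m : ℤ)) fun i => -y i ^ 2 := by
  have hy0 (i : Fin n) : y i ≠ 0 := fun h => hy i (by simp [h])
  have hexp (j : Fin n) :
      2 * (m : ℤ) + 2 * n - 2 * (j : ℕ) - 1 = 2 * ((m + Fin.rev j : ℕ) : ℤ) + 1 := by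
    rw [Fin.val_rev]; omega
  have hbound (j : Fin n) : (m : ℤ) + n - 1 - (j : ℕ) = ((m + Fin.rev j : ℕ) : ℤ) := by
    rw [Fin.val_rev]; omega
  have hdiag : ∏ i, (y i ^ 2 - (y i ^ 2)⁻¹) = (∏ i, (y i - (y i)⁻¹)) * ∏ i, (y i + (y i)⁻¹) := by
    rw [← prod_mul_distrib]
    exact prod_congr rfl fun i _ => by rw [← inv_pow]; ring
  rw [schur, soOddD, soOddL, det_rect_appendInv_sq m hy0,
    prod_ite_lt_appendInv_sub fun i => pow_ne_zero 2 (hy0 i), hdiag]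
  simp only [hexp, hbound]
  rw [det_zpow_odd_add_zpow_neg_odd hy0, ← Fin.sign_revPerm_mul_neg_one_pow m n]
  have hP : ∏ i, (y i + (y i)⁻¹) ≠ 0 := prod_ne_zero_iff.2 fun i _ => hy i
  generalize ∏ i, (y i + (y i)⁻¹) = P at hP ⊢
  field_simp

end

theorem Y_ne_zero {n : ℕ} (i : Fin n) : Y i ≠ 0 :=
  (map_ne_zero_iff _ (IsFractionRing.injective _ (K n))).2 (MvPolynomial.X_ne_zero i)

theorem Y_add_inv_ne_zero {n : ℕ} (i : Fin n) : Y i + (Y i)⁻¹ ≠ 0 := by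
  have hX : (MvPolynomial.X i ^ 2 + 1 : MvPolynomial (Fin n) ℚ) ≠ 0 := fun h => by
    simpa using congrArg (MvPolynomial.eval 0) h
  have hY : Y i ^ 2 + 1 ≠ 0 := by
    simpa [Y] using (map_ne_zero_iff _ (IsFractionRing.injective _ (K n))).2 hX
  rw [show Y i + (Y i)⁻¹ = (Y i ^ 2 + 1) / Y i by field_simp [Y_ne_zero i]]
  exact div_ne_zero hY (Y_ne_zero i)

/-- s_{((2m)^n,0^n)}(x,x⁻¹) = (-1)^{mn} · so^odd_{(m^n)}(x) · so^odd_{(m^n)}(-x). -/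
theorem schur_rect_even_factorization (m n : ℕ) :
    schur (2 * n)
        (fun j => if (j : ℕ) < n then (2 * m : ℤ) else 0)
        (fun i => if h : (i : ℕ) < n then Xv ⟨i, h⟩
                  else (Xv ⟨(i : ℕ) - n, by have := i.isLt; omega⟩)⁻¹)
      = (-1 : K n) ^ (m * n)
        * soOddD n (fun _ => 2 * (m : ℤ)) Y
        * soOddL n (fun _ => (m : ℤ)) (fun i => -(Xv i)) := by
  exact schur_appendInv_sq_rect m Y_add_inv_ne_zero
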